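/- arXiv:1710.09554 — 2 statements merged into one kernel-verified Lean document; each statement's English description precedes it below -/
import Mathlib

section
/- Variance bound on the SCDF-SAGA update direction (Corollary 2, with explicit provable constants): Suppose Assumption 2 holds, let x* ∈ ℝ^N and β_i^* := −(∂G(x*))^T∇F_i(G(x*)). Then for every x ∈ ℝ^N, every table φ = (φ_1,…,φ_m) of points of ℝ^N, every integer A ≥ 1, and every family of vectors β_1,…,β_n ∈ ℝ^N, E_{σ,i}[ ‖(∂Ĝ(σ,x,φ))^T ∇F_i(Ĝ(σ,x,φ)) + β_i‖² ] ≤ 8(B_F² L_G² + B_G⁴ L_F²)·((1/A)·(1/m)∑_{j=1}^m ‖x − φ_j‖² + ‖x − x*‖²) + 2·(1/n)∑_{i=1}^n ‖β_i − β_i^*‖². -/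
noncomputable section

open Finset
open scoped RealInnerProductSpace

abbrev Euc (N : ℕ) := EuclideanSpace ℝ (Fin N)

/-- Frobenius norm of a linear map between Euclidean spaces: the square root of the
sum of the squared norms of the columns. -/
def frobNorm {N M : ℕ} (T : Euc N →L[ℝ] Euc M) : ℝ :=
  Real.sqrt (∑ j : Fin N, ‖T (EuclideanSpace.single j 1)‖ ^ 2)

/-- The averaged inner function `G = (1/m) ∑ⱼ Gⱼ`. -/
def Gbar {m N M : ℕ} (G : Fin m → Euc N → Euc M) (x : Euc N) : Euc M :=
  (m : ℝ)⁻¹ • ∑ j, G j x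

/-- The averaged Jacobian `∂G = (1/m) ∑ⱼ ∂Gⱼ`. -/
def Jbar {m N M : ℕ} (J : Fin m → Euc N → (Euc N →L[ℝ] Euc M)) (x : Euc N) :
    Euc N →L[ℝ] Euc M :=
  (m : ℝ)⁻¹ • ∑ j, J j x

/-- `Tᵀ v`: the transpose (adjoint) of `T` applied to `v`. -/
def transApp {N M : ℕ} (T : Euc N →L[ℝ] Euc M) (v : Euc M) : Euc N :=
  ContinuousLinearMap.adjoint T v

/-- Assumption 2 of the paper: bounded gradients, Lipschitz gradients, bounded
Jacobians (Frobenius norm), Lipschitz inner functions and Lipschitz Jacobians. -/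
def Assumption2 {n m N M : ℕ} (G : Fin m → Euc N → Euc M)
    (J : Fin m → Euc N → (Euc N →L[ℝ] Euc M))
    (gradF : Fin n → Euc M → Euc M) (BF LF BG LG : ℝ) : Prop :=
  (∀ i y, ‖gradF i y‖ ≤ BF) ∧
  (∀ i y y', ‖gradF i y - gradF i y'‖ ≤ LF * ‖y - y'‖) ∧
  (∀ j x, frobNorm (J j x) ≤ BG) ∧
  (∀ j x x', ‖G j x - G j x'‖ ≤ BG * ‖x - x'‖) ∧
  (∀ j x x', frobNorm (J j x - J j x') ≤ LG * ‖x - x'‖)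

/-- Continuous differentiability of the data, with the prescribed Jacobians and
gradients. -/
def SmoothData {n m N M : ℕ} (Fi : Fin n → Euc M → ℝ) (G : Fin m → Euc N → Euc M)
    (J : Fin m → Euc N → (Euc N →L[ℝ] Euc M)) (gradF : Fin n → Euc M → Euc M) : Prop :=
  (∀ j x, HasFDerivAt (G j) (J j x) x) ∧ (∀ j, Continuous (J j)) ∧
  (∀ i y, HasGradientAt (Fi i) (gradF i y) y) ∧ (∀ i, Continuous (gradF i))

/-- Uniform average over all tuples `σ ∈ {1,…,m}^A`. -/
def Esig {m A : ℕ} (f : (Fin A → Fin m) → ℝ) : ℝ :=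
  (∑ σ : Fin A → Fin m, f σ) / (m ^ A : ℝ)

/-- The SAGA estimator `Ĝ(σ,x,φ)` of the inner function. -/
def GhatSAGA {m N M : ℕ} (G : Fin m → Euc N → Euc M) {A : ℕ}
    (σ : Fin A → Fin m) (x : Euc N) (φ : Fin m → Euc N) : Euc M :=
  (A : ℝ)⁻¹ • ∑ l, (G (σ l) x - G (σ l) (φ (σ l))) + (m : ℝ)⁻¹ • ∑ j, G j (φ j)

/-- The SAGA estimator `∂Ĝ(σ,x,φ)` of the Jacobian. -/
def JhatSAGA {m N M : ℕ} (J : Fin m → Euc N → (Euc N →L[ℝ] Euc M)) {A : ℕ}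
    (σ : Fin A → Fin m) (x : Euc N) (φ : Fin m → Euc N) : Euc N →L[ℝ] Euc M :=
  (A : ℝ)⁻¹ • ∑ l, (J (σ l) x - J (σ l) (φ (σ l))) + (m : ℝ)⁻¹ • ∑ j, J j (φ j)

/-!
Split the update direction as `(Ĵᵀ ∇Fᵢ(Ĝ) - ∂G(x*)ᵀ ∇Fᵢ(G(x*))) + (βᵢ - βᵢ*)`. By the bounds on
`∇Fᵢ` and `∂G(x*)`, the first part is at most `B_F ‖Ĵ - ∂G(x*)‖_F + B_G L_F ‖Ĝ - G(x*)‖`, so it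
remains to bound the mean-square deviations of the two SAGA estimators; for `Ĵ` this is done on
the vector of its columns, whose Euclidean norm is the Frobenius norm. A SAGA estimator at `x`
minus the average at `x*` is a centred mean of `A` uniform draws from the table differences
`gⱼ(x) - gⱼ(φⱼ)`, whose variance is `1/A` times their second moment, plus the distance between
the averages at `x` and at `x*`; the Lipschitz bounds turn both into the right-hand side.
-/

open scoped BigOperators

lemma Esig_eq_expect {m A : ℕ} (f : (Fin A → Fin m) → ℝ) : Esig f = 𝔼 σ, f σ := by
  rw [Esig, Fintype.expect_eq_sum_div_card, Fintype.card_fun, Fintype.card_fin, Fintype.card_fin]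
  push_cast
  rfl

lemma inv_natCast_mul_sum_eq_expect {m : ℕ} (f : Fin m → ℝ) :
    (m : ℝ)⁻¹ * ∑ j, f j = 𝔼 j, f j := by
  rw [Fintype.expect_eq_sum_div_card, Fintype.card_fin, div_eq_inv_mul]

lemma norm_add_sq_le_two_mul {F : Type*} [SeminormedAddCommGroup F] (a b : F) :
    ‖a + b‖ ^ 2 ≤ 2 * (‖a‖ ^ 2 + ‖b‖ ^ 2) :=
  (pow_le_pow_left₀ (norm_nonneg _) (norm_add_le a b) 2).trans add_sq_le

lemma norm_inv_natCast_smul_sum_le {F : Type*} [SeminormedAddCommGroup F] [NormedSpace ℝ F]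
    {m : ℕ} (hm : 0 < m) {v : Fin m → F} {C : ℝ} (hv : ∀ j, ‖v j‖ ≤ C) :
    ‖(m : ℝ)⁻¹ • ∑ j, v j‖ ≤ C := by
  have : Nonempty (Fin m) := Fin.pos_iff_nonempty.mp hm
  calc ‖(m : ℝ)⁻¹ • ∑ j, v j‖ ≤ (m : ℝ)⁻¹ * ∑ j, ‖v j‖ := by
        rw [norm_smul, norm_inv, Real.norm_natCast]
        gcongr
        exact norm_sum_le _ _
    _ = 𝔼 j, ‖v j‖ := inv_natCast_mul_sum_eq_expect _
    _ ≤ C := Finset.expect_le univ_nonempty fun j _ => hv j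

section SampleMean

variable {E : Type*} [NormedAddCommGroup E] [InnerProductSpace ℝ E] {ι : Type*} [Fintype ι]

lemma expect_inner_left (Y : ι → E) (v : E) :
    𝔼 j, ⟪Y j, v⟫ = ⟪(Fintype.card ι : ℝ)⁻¹ • ∑ j, Y j, v⟫ := by
  rw [Fintype.expect_eq_sum_div_card, real_inner_smul_left, sum_inner, div_eq_inv_mul]

lemma expect_norm_sq_sub_mean [Nonempty ι] (Y : ι → E) :
    𝔼 j, ‖Y j - (Fintype.card ι : ℝ)⁻¹ • ∑ j, Y j‖ ^ 2
      = 𝔼 j, ‖Y j‖ ^ 2 - ‖(Fintype.card ι : ℝ)⁻¹ • ∑ j, Y j‖ ^ 2 := by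
  simp_rw [norm_sub_sq_real, expect_add_distrib, expect_sub_distrib, ← mul_expect,
    expect_inner_left, real_inner_self_eq_norm_sq, Fintype.expect_const]
  ring

lemma expect_norm_sq_sum_comp_of_sum_eq_zero [Nonempty ι] {Z : ι → E} (hZ : ∑ j, Z j = 0)
    (A : ℕ) : 𝔼 σ : Fin A → ι, ‖∑ l, Z (σ l)‖ ^ 2 = A * 𝔼 j, ‖Z j‖ ^ 2 := by
  induction A with
  | zero => simp
  | succ A ih =>
    have hcross (v : E) : 𝔼 j, ⟪Z j, v⟫ = 0 := by
      rw [expect_inner_left, hZ, smul_zero, inner_zero_left]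
    calc 𝔼 σ : Fin (A + 1) → ι, ‖∑ l, Z (σ l)‖ ^ 2
        = 𝔼 j, 𝔼 τ : Fin A → ι, ‖Z j + ∑ l, Z (τ l)‖ ^ 2 := by
          rw [← expect_product', univ_product_univ]
          exact Fintype.expect_equiv (Fin.consEquiv fun _ => ι).symm _ _
            fun σ => by simp [Fin.sum_univ_succ, Fin.consEquiv, Fin.tail]
      _ = 𝔼 j, ‖Z j‖ ^ 2 + 2 * 𝔼 τ : Fin A → ι, 𝔼 j, ⟪Z j, ∑ l, Z (τ l)⟫
            + 𝔼 τ : Fin A → ι, ‖∑ l, Z (τ l)‖ ^ 2 := by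
          simp_rw [norm_add_sq_real, expect_add_distrib, ← mul_expect, Fintype.expect_const]
          rw [expect_comm]
      _ = (A + 1 : ℕ) * 𝔼 j, ‖Z j‖ ^ 2 := by
          simp only [hcross, expect_const_zero, ih]
          push_cast
          ring

lemma expect_norm_sq_sample_mean_sub_mean_le [Nonempty ι] {A : ℕ} (hA : 0 < A) (Y : ι → E) :
    𝔼 σ : Fin A → ι, ‖(A : ℝ)⁻¹ • ∑ l, Y (σ l) - (Fintype.card ι : ℝ)⁻¹ • ∑ j, Y j‖ ^ 2
      ≤ (A : ℝ)⁻¹ * 𝔼 j, ‖Y j‖ ^ 2 := by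
  set μ := (Fintype.card ι : ℝ)⁻¹ • ∑ j, Y j
  have hA' : (A : ℝ) ≠ 0 := by positivity
  have hcentred : ∑ j, (Y j - μ) = 0 := by
    rw [sum_sub_distrib, sum_const, card_univ, ← Nat.cast_smul_eq_nsmul ℝ,
      smul_inv_smul₀ (Nat.cast_ne_zero.mpr Fintype.card_ne_zero), sub_self]
  have hsample (σ : Fin A → ι) :
      (A : ℝ)⁻¹ • ∑ l, Y (σ l) - μ = (A : ℝ)⁻¹ • ∑ l, (Y (σ l) - μ) := by
    rw [sum_sub_distrib, sum_const, card_univ, Fintype.card_fin, smul_sub,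
      ← Nat.cast_smul_eq_nsmul ℝ, inv_smul_smul₀ hA']
  calc 𝔼 σ : Fin A → ι, ‖(A : ℝ)⁻¹ • ∑ l, Y (σ l) - μ‖ ^ 2
      = (A : ℝ)⁻¹ * 𝔼 j, ‖Y j - μ‖ ^ 2 := by
        simp_rw [hsample, norm_smul, mul_pow, ← mul_expect,
          expect_norm_sq_sum_comp_of_sum_eq_zero hcentred, norm_inv, Real.norm_natCast]
        field_simp
    _ ≤ (A : ℝ)⁻¹ * 𝔼 j, ‖Y j‖ ^ 2 := by
        rw [expect_norm_sq_sub_mean]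
        gcongr
        exact sub_le_self _ (sq_nonneg _)

end SampleMean

-- `GhatSAGA G` and `JhatSAGA J` unfold to `sagaEstimator G` and `sagaEstimator J`.
def sagaEstimator {X E : Type*} [AddCommGroup E] [Module ℝ E] {m A : ℕ} (g : Fin m → X → E)
    (σ : Fin A → Fin m) (x : X) (φ : Fin m → X) : E :=
  (A : ℝ)⁻¹ • ∑ l, (g (σ l) x - g (σ l) (φ (σ l))) + (m : ℝ)⁻¹ • ∑ j, g j (φ j)

lemma map_sagaEstimator {X E F : Type*} [AddCommGroup E] [Module ℝ E] [AddCommGroup F]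
    [Module ℝ F] (L : E →ₗ[ℝ] F) {m A : ℕ} (g : Fin m → X → E) (σ : Fin A → Fin m) (x : X)
    (φ : Fin m → X) :
    L (sagaEstimator g σ x φ) = sagaEstimator (fun j y => L (g j y)) σ x φ := by
  simp only [sagaEstimator, map_add, map_smul, map_sum, map_sub]

lemma expect_norm_sq_sagaEstimator_sub_le {X E : Type*} [SeminormedAddCommGroup X]
    [NormedAddCommGroup E] [InnerProductSpace ℝ E] {m A : ℕ} (hm : 0 < m) (hA : 0 < A)
    {g : Fin m → X → E} {C : ℝ} (hg : ∀ j a b, ‖g j a - g j b‖ ≤ C * ‖a - b‖)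
    (x xstar : X) (φ : Fin m → X) :
    𝔼 σ : Fin A → Fin m, ‖sagaEstimator g σ x φ - (m : ℝ)⁻¹ • ∑ j, g j xstar‖ ^ 2
      ≤ 2 * C ^ 2 * ((A : ℝ)⁻¹ * 𝔼 j, ‖x - φ j‖ ^ 2 + ‖x - xstar‖ ^ 2) := by
  have : Nonempty (Fin m) := Fin.pos_iff_nonempty.mp hm
  have hg_sq (j a b) : ‖g j a - g j b‖ ^ 2 ≤ C ^ 2 * ‖a - b‖ ^ 2 := by
    rw [← mul_pow]
    exact pow_le_pow_left₀ (norm_nonneg _) (hg j a b) 2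
  set Y : Fin m → E := fun j => g j x - g j (φ j)
  have hsplit (σ : Fin A → Fin m) : sagaEstimator g σ x φ - (m : ℝ)⁻¹ • ∑ j, g j xstar
      = ((A : ℝ)⁻¹ • ∑ l, Y (σ l) - (m : ℝ)⁻¹ • ∑ j, Y j)
        + (m : ℝ)⁻¹ • ∑ j, (g j x - g j xstar) := by
    simp only [sagaEstimator, Y, sum_sub_distrib, smul_sub]
    abel
  have hdrift : ‖(m : ℝ)⁻¹ • ∑ j, (g j x - g j xstar)‖ ^ 2 ≤ C ^ 2 * ‖x - xstar‖ ^ 2 := by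
    rw [← mul_pow]
    exact pow_le_pow_left₀ (norm_nonneg _)
      (norm_inv_natCast_smul_sum_le hm fun j => hg j x xstar) 2
  have hvar := expect_norm_sq_sample_mean_sub_mean_le hA Y
  rw [Fintype.card_fin] at hvar
  calc 𝔼 σ : Fin A → Fin m, ‖sagaEstimator g σ x φ - (m : ℝ)⁻¹ • ∑ j, g j xstar‖ ^ 2
      ≤ 𝔼 σ : Fin A → Fin m, 2 * (‖(A : ℝ)⁻¹ • ∑ l, Y (σ l) - (m : ℝ)⁻¹ • ∑ j, Y j‖ ^ 2
          + C ^ 2 * ‖x - xstar‖ ^ 2) := by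
        gcongr with σ
        rw [hsplit]
        exact (norm_add_sq_le_two_mul _ _).trans (by gcongr)
    _ ≤ 2 * ((A : ℝ)⁻¹ * 𝔼 j, C ^ 2 * ‖x - φ j‖ ^ 2 + C ^ 2 * ‖x - xstar‖ ^ 2) := by
        rw [← mul_expect, expect_add_distrib, Fintype.expect_const]
        gcongr
        exact hvar.trans (by gcongr with j; exact hg_sq j x (φ j))
    _ = 2 * C ^ 2 * ((A : ℝ)⁻¹ * 𝔼 j, ‖x - φ j‖ ^ 2 + ‖x - xstar‖ ^ 2) := by
        rw [← mul_expect]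
        ring

def columns {N M : ℕ} : (Euc N →L[ℝ] Euc M) →ₗ[ℝ] PiLp 2 (fun _ : Fin N => Euc M) where
  toFun T := WithLp.toLp 2 fun k => T (EuclideanSpace.single k 1)
  map_add' _ _ := rfl
  map_smul' _ _ := rfl

lemma frobNorm_eq_norm_columns {N M : ℕ} (T : Euc N →L[ℝ] Euc M) :
    frobNorm T = ‖columns T‖ := by
  rw [frobNorm, PiLp.norm_eq_of_L2]
  rfl

lemma frobNorm_nonneg {N M : ℕ} (T : Euc N →L[ℝ] Euc M) : 0 ≤ frobNorm T :=
  Real.sqrt_nonneg _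

lemma frobNorm_Jbar_le {m N M : ℕ} (hm : 0 < m) {J : Fin m → Euc N → (Euc N →L[ℝ] Euc M)}
    {x : Euc N} {B : ℝ} (hJ : ∀ j, frobNorm (J j x) ≤ B) : frobNorm (Jbar J x) ≤ B := by
  rw [frobNorm_eq_norm_columns, Jbar, map_smul, map_sum]
  exact norm_inv_natCast_smul_sum_le hm fun j => (frobNorm_eq_norm_columns _).symm.trans_le (hJ j)

lemma expect_frobNorm_sq_JhatSAGA_sub_le {m N M A : ℕ} (hm : 0 < m) (hA : 0 < A)
    {J : Fin m → Euc N → (Euc N →L[ℝ] Euc M)} {C : ℝ}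
    (hJ : ∀ j a b, frobNorm (J j a - J j b) ≤ C * ‖a - b‖) (x xstar : Euc N) (φ : Fin m → Euc N) :
    𝔼 σ : Fin A → Fin m, frobNorm (JhatSAGA J σ x φ - Jbar J xstar) ^ 2
      ≤ 2 * C ^ 2 * ((A : ℝ)⁻¹ * 𝔼 j, ‖x - φ j‖ ^ 2 + ‖x - xstar‖ ^ 2) := by
  have hcol (j a b) : ‖columns (J j a) - columns (J j b)‖ ≤ C * ‖a - b‖ := by
    rw [← map_sub, ← frobNorm_eq_norm_columns]
    exact hJ j a b
  convert expect_norm_sq_sagaEstimator_sub_le hm hA hcol x xstar φ using 4 with σ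
  rw [frobNorm_eq_norm_columns, map_sub, Jbar, map_smul, map_sum]
  exact congrArg (‖· - _‖) (map_sagaEstimator columns J σ x φ)

lemma norm_transApp_le {N M : ℕ} (T : Euc N →L[ℝ] Euc M) (v : Euc M) :
    ‖transApp T v‖ ≤ frobNorm T * ‖v‖ := by
  have hcoord (k : Fin N) : transApp T v k = ⟪v, T (EuclideanSpace.single k 1)⟫ := by
    rw [← ContinuousLinearMap.adjoint_inner_left, EuclideanSpace.inner_single_right]
    simp [transApp]
  have hsq : ‖transApp T v‖ ^ 2 ≤ (frobNorm T * ‖v‖) ^ 2 := by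
    rw [EuclideanSpace.norm_sq_eq, mul_pow, frobNorm, Real.sq_sqrt (by positivity), sum_mul]
    gcongr with k
    rw [hcoord, Real.norm_eq_abs, ← mul_pow]
    exact pow_le_pow_left₀ (abs_nonneg _) ((abs_real_inner_le_norm _ _).trans_eq (mul_comm _ _)) 2
  exact (pow_le_pow_iff_left₀ (norm_nonneg _)
    (mul_nonneg (frobNorm_nonneg T) (norm_nonneg v)) two_ne_zero).mp hsq

lemma norm_transApp_sub_transApp_le {N M : ℕ} (T T' : Euc N →L[ℝ] Euc M) (u u' : Euc M) :
    ‖transApp T u - transApp T' u'‖ ≤ frobNorm (T - T') * ‖u‖ + frobNorm T' * ‖u - u'‖ := by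
  have hsplit : transApp T u - transApp T' u' = transApp (T - T') u + transApp T' (u - u') := by
    simp only [transApp, map_sub, sub_apply]
    abel
  rw [hsplit]
  exact (norm_add_le _ _).trans (add_le_add (norm_transApp_le _ _) (norm_transApp_le _ _))

lemma norm_sq_transApp_add_le {N M : ℕ} {BF LF BG : ℝ} {g : Euc M → Euc M} {y y' : Euc M}
    (hg_bdd : ‖g y‖ ≤ BF) (hg_lip : ‖g y - g y'‖ ≤ LF * ‖y - y'‖)
    {T T' : Euc N →L[ℝ] Euc M} (hT' : frobNorm T' ≤ BG) (b : Euc N) :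
    ‖transApp T (g y) + b‖ ^ 2
      ≤ 4 * BF ^ 2 * frobNorm (T - T') ^ 2 + 4 * (BG ^ 2 * LF ^ 2) * ‖y - y'‖ ^ 2
        + 2 * ‖b - -transApp T' (g y')‖ ^ 2 := by
  set d := transApp T (g y) - transApp T' (g y')
  have hd : ‖d‖ ≤ BF * frobNorm (T - T') + BG * (LF * ‖y - y'‖) := by
    refine (norm_transApp_sub_transApp_le _ _ _ _).trans (add_le_add ?_ ?_)
    · rw [mul_comm]
      exact mul_le_mul_of_nonneg_right hg_bdd (frobNorm_nonneg _)
    · exact mul_le_mul hT' hg_lip (norm_nonneg _) ((frobNorm_nonneg _).trans hT')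
  have hd_sq : ‖d‖ ^ 2 ≤ 2 * (BF ^ 2 * frobNorm (T - T') ^ 2 + BG ^ 2 * LF ^ 2 * ‖y - y'‖ ^ 2) :=
    (pow_le_pow_left₀ (norm_nonneg _) hd 2).trans (add_sq_le.trans_eq (by ring))
  calc ‖transApp T (g y) + b‖ ^ 2 = ‖d + (b - -transApp T' (g y'))‖ ^ 2 := by
        congr 2
        simp only [d]
        abel
    _ ≤ 2 * (‖d‖ ^ 2 + ‖b - -transApp T' (g y')‖ ^ 2) := norm_add_sq_le_two_mul _ _
    _ ≤ _ := by linarith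

theorem saga_update_direction_variance_bound_general
    {n m N M A : ℕ} (hn : 0 < n) (hm : 0 < m) (hA : 0 < A)
    (BF LF BG LG : ℝ)
    (G : Fin m → Euc N → Euc M)
    (J : Fin m → Euc N → (Euc N →L[ℝ] Euc M)) (gradF : Fin n → Euc M → Euc M)
    (hA2 : Assumption2 G J gradF BF LF BG LG)
    (xstar : Euc N) (x : Euc N) (φ : Fin m → Euc N) (β : Fin n → Euc N) :
    (n : ℝ)⁻¹ * ∑ i, Esig (fun σ : Fin A → Fin m =>
        ‖transApp (JhatSAGA J σ x φ) (gradF i (GhatSAGA G σ x φ)) + β i‖ ^ 2)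
      ≤ 8 * (BF ^ 2 * LG ^ 2 + BG ^ 4 * LF ^ 2) *
          ((1 / (A : ℝ)) * ((m : ℝ)⁻¹ * ∑ j, ‖x - φ j‖ ^ 2) + ‖x - xstar‖ ^ 2) +
        2 * ((n : ℝ)⁻¹ * ∑ i,
          ‖β i - (-(transApp (Jbar J xstar) (gradF i (Gbar G xstar))))‖ ^ 2) := by
  obtain ⟨hgrad_bdd, hgrad_lip, hJ_bdd, hG_lip, hJ_lip⟩ := hA2
  have : Nonempty (Fin n) := Fin.pos_iff_nonempty.mp hn
  have : Nonempty (Fin m) := Fin.pos_iff_nonempty.mp hm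
  simp only [inv_natCast_mul_sum_eq_expect, one_div, Esig_eq_expect]
  set S := (A : ℝ)⁻¹ * 𝔼 j, ‖x - φ j‖ ^ 2 + ‖x - xstar‖ ^ 2
  have hG : 𝔼 σ : Fin A → Fin m, ‖GhatSAGA G σ x φ - Gbar G xstar‖ ^ 2 ≤ 2 * BG ^ 2 * S :=
    expect_norm_sq_sagaEstimator_sub_le hm hA hG_lip x xstar φ
  have hJ : 𝔼 σ : Fin A → Fin m, frobNorm (JhatSAGA J σ x φ - Jbar J xstar) ^ 2 ≤ 2 * LG ^ 2 * S :=
    expect_frobNorm_sq_JhatSAGA_sub_le hm hA hJ_lip x xstar φ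
  have hJbar : frobNorm (Jbar J xstar) ≤ BG := frobNorm_Jbar_le hm (hJ_bdd · xstar)
  calc 𝔼 i, 𝔼 σ : Fin A → Fin m,
        ‖transApp (JhatSAGA J σ x φ) (gradF i (GhatSAGA G σ x φ)) + β i‖ ^ 2
      ≤ 𝔼 i, 𝔼 σ : Fin A → Fin m,
          (4 * BF ^ 2 * frobNorm (JhatSAGA J σ x φ - Jbar J xstar) ^ 2
            + 4 * (BG ^ 2 * LF ^ 2) * ‖GhatSAGA G σ x φ - Gbar G xstar‖ ^ 2
            + 2 * ‖β i - -transApp (Jbar J xstar) (gradF i (Gbar G xstar))‖ ^ 2) := by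
        gcongr with i _ σ
        exact norm_sq_transApp_add_le (hgrad_bdd i _) (hgrad_lip i _ _) hJbar _
    _ ≤ 𝔼 i, (4 * BF ^ 2 * (2 * LG ^ 2 * S) + 4 * (BG ^ 2 * LF ^ 2) * (2 * BG ^ 2 * S)
          + 2 * ‖β i - -transApp (Jbar J xstar) (gradF i (Gbar G xstar))‖ ^ 2) := by
        simp only [expect_add_distrib, ← mul_expect, Fintype.expect_const]
        gcongr
    _ = _ := by
        rw [expect_add_distrib, Fintype.expect_const, ← mul_expect]
        ring

/-- Corollary 2 (explicit constants): variance bound on the SCDF-SAGA update direction. -/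
theorem saga_update_direction_variance_bound
    {n m N M A : ℕ} (hn : 0 < n) (hm : 0 < m) (hA : 0 < A)
    (BF LF BG LG : ℝ) (hBF : 0 < BF) (hLF : 0 < LF) (hBG : 0 < BG) (hLG : 0 < LG)
    (Fi : Fin n → Euc M → ℝ) (G : Fin m → Euc N → Euc M)
    (J : Fin m → Euc N → (Euc N →L[ℝ] Euc M)) (gradF : Fin n → Euc M → Euc M)
    (hsm : SmoothData Fi G J gradF)
    (hA2 : Assumption2 G J gradF BF LF BG LG)
    (xstar : Euc N) (x : Euc N) (φ : Fin m → Euc N) (β : Fin n → Euc N) :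
    (n : ℝ)⁻¹ * ∑ i, Esig (fun σ : Fin A → Fin m =>
        ‖transApp (JhatSAGA J σ x φ) (gradF i (GhatSAGA G σ x φ)) + β i‖ ^ 2)
      ≤ 8 * (BF ^ 2 * LG ^ 2 + BG ^ 4 * LF ^ 2) *
          ((1 / (A : ℝ)) * ((m : ℝ)⁻¹ * ∑ j, ‖x - φ j‖ ^ 2) + ‖x - xstar‖ ^ 2) +
        2 * ((n : ℝ)⁻¹ * ∑ i,
          ‖β i - (-(transApp (Jbar J xstar) (gradF i (Gbar G xstar))))‖ ^ 2) :=
  saga_update_direction_variance_bound_general hn hm hA BF LF BG LG G J gradF hA2 xstar x φ β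
end
end

section
/- Variance of the SAGA estimator of the partial gradient of G: Suppose each Jacobian ∂G_j is L_G-Lipschitz in Frobenius norm, i.e. ‖∂G_j(x) − ∂G_j(x′)‖_F ≤ L_G‖x − x′‖ for all x, x′ ∈ ℝ^N and all j. Then for every x ∈ ℝ^N, every table φ = (φ_1,…,φ_m) of points of ℝ^N, and every integer A ≥ 1, E_σ[ ‖∂Ĝ(σ,x,φ) − ∂G(x)‖_F² ] ≤ L_G² · (1/A) · (1/m)∑_{j=1}^m ‖x − φ_j‖². -/
noncomputable section

open Finset
open scoped RealInnerProductSpace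

/-! Reading a linear map through its columns turns the Frobenius norm into the norm of the
inner product space `PiLp 2 (fun _ : Fin N => Euc M)`, so everything happens with the vectors
`dⱼ = ∂Gⱼ(x) − ∂Gⱼ(φⱼ)` of one inner product space. The estimation error is the average of `A`
independent uniform draws of the centred vectors `dⱼ − d̄`; cross terms of distinct draws have
mean zero, so its second moment is `1/A` times that of one draw, which is at most
`(1/m) ∑ ‖dⱼ‖²`. The Lipschitz bound `‖dⱼ‖ ≤ L_G ‖x − φⱼ‖` finishes. -/

section Variance

variable {E : Type*} [NormedAddCommGroup E] [InnerProductSpace ℝ E]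

theorem sum_fun_fin_succ_eq_sum_cons {β R : Type*} [Fintype β] [AddCommMonoid R] {A : ℕ}
    (f : (Fin (A + 1) → β) → R) :
    ∑ σ, f σ = ∑ a, ∑ τ : Fin A → β, f (Fin.cons a τ) := by
  rw [← (Fin.consEquiv fun _ => β).sum_comp, Fintype.sum_prod_type]
  rfl

theorem mul_sum_norm_sq_sum_comp {m : ℕ} {v : Fin m → E} (hv : ∑ j, v j = 0) (A : ℕ) :
    m * ∑ σ : Fin A → Fin m, ‖∑ l, v (σ l)‖ ^ 2 = A * m ^ A * ∑ j, ‖v j‖ ^ 2 := by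
  induction A with
  | zero => simp
  | succ A ih =>
    have cross : ∑ a, ∑ τ : Fin A → Fin m, ⟪v a, ∑ l, v (τ l)⟫ = 0 := by
      simp_rw [← inner_sum, ← sum_inner, hv, inner_zero_left]
    rw [sum_fun_fin_succ_eq_sum_cons]
    simp only [Fin.sum_univ_succ, Fin.cons_zero, Fin.cons_succ, norm_add_sq_real,
      sum_add_distrib, ← mul_sum, cross, sum_const, card_univ, Fintype.card_fun,
      Fintype.card_fin, nsmul_eq_mul]
    push_cast
    linear_combination (m : ℝ) * ih

theorem esig_norm_sq_avg_comp {m : ℕ} (hm : 0 < m) {A : ℕ} (hA : 0 < A) {v : Fin m → E}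
    (hv : ∑ j, v j = 0) :
    Esig (fun σ : Fin A → Fin m => ‖(A : ℝ)⁻¹ • ∑ l, v (σ l)‖ ^ 2)
      = (A : ℝ)⁻¹ * ((m : ℝ)⁻¹ * ∑ j, ‖v j‖ ^ 2) := by
  have hm' : (m : ℝ) ≠ 0 := by positivity
  have hA' : (A : ℝ) ≠ 0 := by positivity
  have h := mul_sum_norm_sq_sum_comp hv A
  simp only [Esig, norm_smul, mul_pow, norm_inv, Real.norm_natCast, ← mul_sum]
  field_simp
  linear_combination h

theorem sum_norm_sq_sub_avg_le {m : ℕ} (u : Fin m → E) :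
    ∑ j, ‖u j - (m : ℝ)⁻¹ • ∑ k, u k‖ ^ 2 ≤ ∑ j, ‖u j‖ ^ 2 := by
  rcases Nat.eq_zero_or_pos m with rfl | hm
  · simp
  set s := ∑ k, u k
  have hcross : ∑ j, ⟪u j, (m : ℝ)⁻¹ • s⟫ = (m : ℝ)⁻¹ * ‖s‖ ^ 2 := by
    rw [← sum_inner, inner_smul_right, real_inner_self_eq_norm_sq]
  have key : ∑ j, ‖u j - (m : ℝ)⁻¹ • s‖ ^ 2 = ∑ j, ‖u j‖ ^ 2 - (m : ℝ)⁻¹ * ‖s‖ ^ 2 := by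
    simp only [norm_sub_sq_real, sum_add_distrib, sum_sub_distrib, ← mul_sum, hcross,
      sum_const, card_univ, Fintype.card_fin, nsmul_eq_mul, norm_smul, norm_inv,
      Real.norm_natCast, mul_pow]
    field_simp
    ring
  rw [key]
  linarith [show 0 ≤ (m : ℝ)⁻¹ * ‖s‖ ^ 2 by positivity]

theorem sum_sub_avg_eq_zero {m : ℕ} (hm : 0 < m) (d : Fin m → E) :
    ∑ j, (d j - (m : ℝ)⁻¹ • ∑ k, d k) = 0 := by
  rw [sum_sub_distrib, sum_const, card_univ, Fintype.card_fin, ← Nat.cast_smul_eq_nsmul ℝ,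
    smul_inv_smul₀ (by positivity), sub_self]

theorem esig_norm_sq_avg_comp_sub_avg_le {m : ℕ} (hm : 0 < m) {A : ℕ} (hA : 0 < A)
    (d : Fin m → E) :
    Esig (fun σ : Fin A → Fin m => ‖(A : ℝ)⁻¹ • ∑ l, d (σ l) - (m : ℝ)⁻¹ • ∑ j, d j‖ ^ 2)
      ≤ (A : ℝ)⁻¹ * ((m : ℝ)⁻¹ * ∑ j, ‖d j‖ ^ 2) := by
  set v : Fin m → E := fun j => d j - (m : ℝ)⁻¹ • ∑ k, d k
  have hcentred : ∀ σ : Fin A → Fin m,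
      (A : ℝ)⁻¹ • ∑ l, d (σ l) - (m : ℝ)⁻¹ • ∑ j, d j = (A : ℝ)⁻¹ • ∑ l, v (σ l) := by
    intro σ
    simp only [v, sum_sub_distrib, sum_const, card_univ, Fintype.card_fin, smul_sub,
      ← Nat.cast_smul_eq_nsmul ℝ, inv_smul_smul₀ (show (A : ℝ) ≠ 0 by positivity)]
  calc _ = Esig (fun σ : Fin A → Fin m => ‖(A : ℝ)⁻¹ • ∑ l, v (σ l)‖ ^ 2) := by
        simp only [hcentred]
    _ = (A : ℝ)⁻¹ * ((m : ℝ)⁻¹ * ∑ j, ‖v j‖ ^ 2) :=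
        esig_norm_sq_avg_comp hm hA (sum_sub_avg_eq_zero hm d)
    _ ≤ _ := by
        have := sum_norm_sq_sub_avg_le d
        gcongr

end Variance

def frobColumns {N M : ℕ} : (Euc N →L[ℝ] Euc M) →ₗ[ℝ] PiLp 2 (fun _ : Fin N => Euc M) where
  toFun T := WithLp.toLp 2 fun c => T (EuclideanSpace.single c 1)
  map_add' _ _ := rfl
  map_smul' _ _ := rfl

theorem frobNorm_eq_norm_frobColumns {N M : ℕ} (T : Euc N →L[ℝ] Euc M) :
    frobNorm T = ‖frobColumns T‖ := by
  rw [frobNorm, PiLp.norm_eq_of_L2]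
  rfl

theorem JhatSAGA_sub_Jbar {m N M A : ℕ} (J : Fin m → Euc N → (Euc N →L[ℝ] Euc M))
    (σ : Fin A → Fin m) (x : Euc N) (φ : Fin m → Euc N) :
    JhatSAGA J σ x φ - Jbar J x
      = (A : ℝ)⁻¹ • ∑ l, (J (σ l) x - J (σ l) (φ (σ l)))
        - (m : ℝ)⁻¹ • ∑ j, (J j x - J j (φ j)) := by
  simp only [JhatSAGA, Jbar, sum_sub_distrib, smul_sub]
  abel

theorem saga_jacobian_variance_general
    {m N M A : ℕ} (hm : 0 < m) (hA : 0 < A) (LG : ℝ)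
    (J : Fin m → Euc N → (Euc N →L[ℝ] Euc M))
    (hJLip : ∀ j (x x' : Euc N), frobNorm (J j x - J j x') ≤ LG * ‖x - x'‖)
    (x : Euc N) (φ : Fin m → Euc N) :
    Esig (fun σ : Fin A → Fin m => frobNorm (JhatSAGA J σ x φ - Jbar J x) ^ 2)
      ≤ LG ^ 2 * (1 / (A : ℝ)) * ((m : ℝ)⁻¹ * ∑ j, ‖x - φ j‖ ^ 2) := by
  set d : Fin m → PiLp 2 (fun _ : Fin N => Euc M) := fun j => frobColumns (J j x - J j (φ j))
  have hcolumns : ∀ σ : Fin A → Fin m, frobNorm (JhatSAGA J σ x φ - Jbar J x)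
      = ‖(A : ℝ)⁻¹ • ∑ l, d (σ l) - (m : ℝ)⁻¹ • ∑ j, d j‖ := by
    intro σ
    rw [JhatSAGA_sub_Jbar, frobNorm_eq_norm_frobColumns]
    simp only [d, map_sub, map_smul, map_sum]
  have hLip : ∀ j, ‖d j‖ ^ 2 ≤ LG ^ 2 * ‖x - φ j‖ ^ 2 := by
    intro j
    rw [← mul_pow, ← frobNorm_eq_norm_frobColumns]
    exact pow_le_pow_left₀ (Real.sqrt_nonneg _) (hJLip j x (φ j)) 2
  calc _ = Esig (fun σ : Fin A → Fin m =>
          ‖(A : ℝ)⁻¹ • ∑ l, d (σ l) - (m : ℝ)⁻¹ • ∑ j, d j‖ ^ 2) := by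
        simp only [hcolumns]
    _ ≤ (A : ℝ)⁻¹ * ((m : ℝ)⁻¹ * ∑ j, ‖d j‖ ^ 2) :=
        esig_norm_sq_avg_comp_sub_avg_le hm hA d
    _ ≤ (A : ℝ)⁻¹ * ((m : ℝ)⁻¹ * ∑ j, LG ^ 2 * ‖x - φ j‖ ^ 2) := by
        gcongr with j
        exact hLip j
    _ = _ := by
        rw [← mul_sum]
        ring

/-- Variance of the SAGA estimator of the partial gradient of `G`. -/
theorem saga_jacobian_variance
    {m N M A : ℕ} (hm : 0 < m) (hA : 0 < A) (LG : ℝ)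
    (G : Fin m → Euc N → Euc M)
    (J : Fin m → Euc N → (Euc N →L[ℝ] Euc M))
    (hJ : ∀ j (x : Euc N), HasFDerivAt (G j) (J j x) x)
    (hJc : ∀ j, Continuous (J j))
    (hJLip : ∀ j (x x' : Euc N), frobNorm (J j x - J j x') ≤ LG * ‖x - x'‖)
    (x : Euc N) (φ : Fin m → Euc N) :
    Esig (fun σ : Fin A → Fin m => frobNorm (JhatSAGA J σ x φ - Jbar J x) ^ 2)
      ≤ LG ^ 2 * (1 / (A : ℝ)) * ((m : ℝ)⁻¹ * ∑ j, ‖x - φ j‖ ^ 2) :=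
  saga_jacobian_variance_general hm hA LG J hJLip x φ
end
end
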